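/- For each positive integer k, the system of equations (1+x)^4 + (k−1)x^4 = k·y^4 and (1+x−y)^4 + (k−1)(x−y)^4 = 2 in real unknowns (x, y) has exactly one solution (x_k, y_k) with y_k > 0. -/
import Mathlib

open Real Finset


lemma mink_core (K a b d : ℝ) (hK : 0 ≤ K) (ha : 0 ≤ a) (hb : 0 ≤ b) (hd : 0 ≤ d) :
    (a+d)^4 + K*(b+d)^4 ≤ ((a^4+K*b^4) ^ ((4:ℝ)⁻¹) + (1+K) ^ ((4:ℝ)⁻¹) * d)^4 := by
  set q : ℝ := K ^ ((4:ℝ)⁻¹) with hq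
  have hq0 : 0 ≤ q := rpow_nonneg hK _
  have hq4 : q ^ 4 = K := by
    rw [hq, show ((4:ℝ))⁻¹ = ((4:ℕ):ℝ)⁻¹ by norm_num]
    exact rpow_inv_natCast_pow hK (by norm_num)
  have key := Real.Lp_add_le_of_nonneg (univ : Finset (Fin 2)) (f := ![a, q*b])
      (g := ![d, q*d]) (p := 4) (by norm_num)
      (by intro i _; fin_cases i <;> simp <;> positivity)
      (by intro i _; fin_cases i <;> simp <;> positivity)
  simp only [Fin.sum_univ_two, Matrix.cons_val_zero, Matrix.cons_val_one, Matrix.head_cons] at key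
  have hrw : ∀ x : ℝ, 0 ≤ x → x ^ (4:ℝ) = x ^ (4:ℕ) := fun x hx => by
    rw [← rpow_natCast x 4]; norm_num
  rw [hrw _ (by positivity), hrw _ (by positivity), hrw _ ha, hrw _ (by positivity),
      hrw _ hd, hrw _ (by positivity)] at key
  have e1 : (q*b + q*d) ^ (4:ℕ) = q^4 * (b+d)^4 := by ring
  have e2 : (q*b) ^ (4:ℕ) = q^4 * b^4 := by ring
  have e3 : (q*d) ^ (4:ℕ) = q^4 * d^4 := by ring
  rw [e1, e2, e3, hq4] at key
  -- key : ((a+d)^4 + K*(b+d)^4) ^ (1/4:ℝ) ≤ (a^4+K*b^4)^(1/4:ℝ) + (d^4+K*d^4)^(1/4:ℝ)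
  have hG : (d^4 + K*d^4 : ℝ) ^ ((1:ℝ)/4) = (1+K) ^ ((4:ℝ)⁻¹) * d := by
    have : (d^4 + K*d^4 : ℝ) = (1+K) * d^4 := by ring
    rw [this, one_div, Real.mul_rpow (by positivity) (by positivity)]
    congr 1
    rw [show ((4:ℝ))⁻¹ = ((4:ℕ):ℝ)⁻¹ by norm_num]
    exact pow_rpow_inv_natCast hd (by norm_num)
  rw [hG] at key
  calc (a+d)^4 + K*(b+d)^4
      = (((a+d)^4 + K*(b+d)^4) ^ ((1:ℝ)/4)) ^ (4:ℕ) := by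
        rw [one_div, show ((4:ℝ))⁻¹ = ((4:ℕ):ℝ)⁻¹ by norm_num,
            rpow_inv_natCast_pow (by positivity) (by norm_num)]
    _ ≤ ((a^4+K*b^4) ^ ((1:ℝ)/4) + (1+K) ^ ((4:ℝ)⁻¹) * d)^4 := by
        apply pow_le_pow_left₀ (by positivity) key 4
    _ = ((a^4+K*b^4) ^ ((4:ℝ)⁻¹) + (1+K) ^ ((4:ℝ)⁻¹) * d)^4 := by rw [one_div]

lemma root4 (x : ℝ) (hx : 0 ≤ x) : (x^4) ^ ((4:ℝ)⁻¹) = x := by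
  rw [show ((4:ℝ))⁻¹ = ((4:ℕ):ℝ)⁻¹ by norm_num]
  exact pow_rpow_inv_natCast hx (by norm_num)

lemma Mle (K : ℝ) (hK : 0 ≤ K) {s c d : ℝ} (hc : 0 ≤ c) (hd : 0 ≤ d)
    (h : (1+s)^4 + K*s^4 ≤ (1+K)*c^4) :
    (1+s+d)^4 + K*(s+d)^4 ≤ (1+K)*(c+d)^4 := by
  set a := |1+s| with hadef
  set b := |s| with hbdef
  have ha : 0 ≤ a := abs_nonneg _
  have hb : 0 ≤ b := abs_nonneg _
  have ha4 : a^4 = (1+s)^4 := Even.pow_abs (by decide) _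
  have hb4 : b^4 = s^4 := Even.pow_abs (by decide) _
  set P4 : ℝ := (1+K) ^ ((4:ℝ)⁻¹) with hP4def
  have hP0 : 0 ≤ P4 := rpow_nonneg (by linarith) _
  have hP4 : P4^4 = 1+K := by
    rw [hP4def, show ((4:ℝ))⁻¹ = ((4:ℕ):ℝ)⁻¹ by norm_num]
    exact rpow_inv_natCast_pow (by linarith) (by norm_num)
  have h1 : (1+s+d)^4 ≤ (a+d)^4 := by
    rw [← Even.pow_abs (n := 4) (by decide) (1+s+d)]
    refine pow_le_pow_left₀ (abs_nonneg _) ?_ 4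
    calc |1+s+d| ≤ |1+s| + |d| := abs_add_le _ _
      _ = a + d := by rw [abs_of_nonneg hd]
  have h2 : (s+d)^4 ≤ (b+d)^4 := by
    rw [← Even.pow_abs (n := 4) (by decide) (s+d)]
    refine pow_le_pow_left₀ (abs_nonneg _) ?_ 4
    calc |s+d| ≤ |s| + |d| := abs_add_le _ _
      _ = b + d := by rw [abs_of_nonneg hd]
  have hroot : (a^4 + K*b^4) ^ ((4:ℝ)⁻¹) ≤ P4 * c := by
    have h' : a^4 + K*b^4 ≤ (1+K)*c^4 := by rw [ha4, hb4]; exact h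
    calc (a^4 + K*b^4) ^ ((4:ℝ)⁻¹) ≤ ((1+K)*c^4) ^ ((4:ℝ)⁻¹) :=
          rpow_le_rpow (by positivity) h' (by norm_num)
      _ = P4 * c := by rw [Real.mul_rpow (by linarith) (by positivity), root4 c hc]
  calc (1+s+d)^4 + K*(s+d)^4 ≤ (a+d)^4 + K*(b+d)^4 := by nlinarith
    _ ≤ ((a^4+K*b^4) ^ ((4:ℝ)⁻¹) + P4 * d)^4 := mink_core K a b d hK ha hb hd
    _ ≤ (P4 * c + P4 * d)^4 := by
        refine pow_le_pow_left₀ (by positivity) ?_ 4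
        linarith
    _ = (1+K)*(c+d)^4 := by rw [show P4*c+P4*d = P4*(c+d) by ring, mul_pow, hP4]

lemma Mlt (K : ℝ) (hK : 0 ≤ K) {s c d : ℝ} (hc : 0 ≤ c) (hd : 0 ≤ d)
    (h : (1+s)^4 + K*s^4 < (1+K)*c^4) :
    (1+s+d)^4 + K*(s+d)^4 < (1+K)*(c+d)^4 := by
  set a := |1+s| with hadef
  set b := |s| with hbdef
  have ha : 0 ≤ a := abs_nonneg _
  have hb : 0 ≤ b := abs_nonneg _
  have ha4 : a^4 = (1+s)^4 := Even.pow_abs (by decide) _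
  have hb4 : b^4 = s^4 := Even.pow_abs (by decide) _
  set P4 : ℝ := (1+K) ^ ((4:ℝ)⁻¹) with hP4def
  have hP0 : 0 ≤ P4 := rpow_nonneg (by linarith) _
  have hP4 : P4^4 = 1+K := by
    rw [hP4def, show ((4:ℝ))⁻¹ = ((4:ℕ):ℝ)⁻¹ by norm_num]
    exact rpow_inv_natCast_pow (by linarith) (by norm_num)
  have h1 : (1+s+d)^4 ≤ (a+d)^4 := by
    rw [← Even.pow_abs (n := 4) (by decide) (1+s+d)]
    refine pow_le_pow_left₀ (abs_nonneg _) ?_ 4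
    calc |1+s+d| ≤ |1+s| + |d| := abs_add_le _ _
      _ = a + d := by rw [abs_of_nonneg hd]
  have h2 : (s+d)^4 ≤ (b+d)^4 := by
    rw [← Even.pow_abs (n := 4) (by decide) (s+d)]
    refine pow_le_pow_left₀ (abs_nonneg _) ?_ 4
    calc |s+d| ≤ |s| + |d| := abs_add_le _ _
      _ = b + d := by rw [abs_of_nonneg hd]
  have hroot : (a^4 + K*b^4) ^ ((4:ℝ)⁻¹) < P4 * c := by
    have h' : a^4 + K*b^4 < (1+K)*c^4 := by rw [ha4, hb4]; exact h
    calc (a^4 + K*b^4) ^ ((4:ℝ)⁻¹) < ((1+K)*c^4) ^ ((4:ℝ)⁻¹) :=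
          Real.rpow_lt_rpow (by positivity) h' (by norm_num)
      _ = P4 * c := by rw [Real.mul_rpow (by linarith) (by positivity), root4 c hc]
  calc (1+s+d)^4 + K*(s+d)^4 ≤ (a+d)^4 + K*(b+d)^4 := by nlinarith
    _ ≤ ((a^4+K*b^4) ^ ((4:ℝ)⁻¹) + P4 * d)^4 := mink_core K a b d hK ha hb hd
    _ < (P4 * c + P4 * d)^4 := by
        refine pow_lt_pow_left₀ ?_ (by positivity) (by norm_num)
        linarith
    _ = (1+K)*(c+d)^4 := by rw [show P4*c+P4*d = P4*(c+d) by ring, mul_pow, hP4]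

set_option maxHeartbeats 1000000 in
/-- **Lemma (uniqueness of the positive solution).** For each positive integer `k`, the
system `(1+x)^4 + (k-1)x^4 = k·y^4` and `(1+x-y)^4 + (k-1)(x-y)^4 = 2` has exactly one
real solution `(x, y)` with `y > 0`. -/
theorem stmt3 (k : ℕ) (hk : 1 ≤ k) :
    ∃! z : ℝ × ℝ, 0 < z.2 ∧
      (1 + z.1) ^ 4 + ((k : ℝ) - 1) * z.1 ^ 4 = (k : ℝ) * z.2 ^ 4 ∧
      (1 + z.1 - z.2) ^ 4 + ((k : ℝ) - 1) * (z.1 - z.2) ^ 4 = 2 := by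
  have hκ : (1:ℝ) ≤ (k:ℝ) := by exact_mod_cast hk
  set K : ℝ := (k:ℝ) - 1 with hKdef
  have hK : 0 ≤ K := by rw [hKdef]; linarith
  have hcast : (k:ℝ) = 1 + K := by rw [hKdef]; ring
  rw [hcast]
  -- no solution with nonnegative t
  have step2 : ∀ t y : ℝ, 0 ≤ t → 0 < y →
      (1+K)*y^4 < (1+(t+y))^4 + K*(t+y)^4 := by
    intro t y ht hy
    have e1 : y^4 ≤ (t+y)^4 := pow_le_pow_left₀ hy.le (by linarith) 4
    have e2 : y^4 < (1+(t+y))^4 := by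
      refine pow_lt_pow_left₀ (by linarith) hy.le (by norm_num)
    nlinarith [mul_le_mul_of_nonneg_left e1 hK]
  -- the negative root of f = 2 is unique
  have negroot : ∀ ta tb : ℝ, ta < tb → tb < 0 →
      (1+ta)^4 + K*ta^4 = 2 → (1+tb)^4 + K*tb^4 = 2 → False := by
    intro ta tb hab hb0 ha hbv
    have ha0 : ta < 0 := lt_trans hab hb0
    have hsc := Even.strictConvexOn_pow (n := 4) (by decide) (by norm_num)
    set l : ℝ := tb / ta with hl
    have hl0 : 0 < l := div_pos_of_neg_of_neg hb0 ha0
    have hlta : l * ta = tb := by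
      rw [hl, div_mul_cancel₀ _ (ne_of_lt ha0)]
    have hl1 : l < 1 := by nlinarith [hlta]
    have c1 : (1+tb)^4 < l*(1+ta)^4 + (1-l)*1 := by
      have := hsc.2 (Set.mem_univ (1+ta)) (Set.mem_univ (1:ℝ))
        (by intro h; nlinarith) hl0 (show (0:ℝ) < 1 - l by linarith) (show l + (1-l) = 1 by ring)
      simp only [smul_eq_mul] at this
      calc (1+tb)^4 = (l*(1+ta) + (1-l)*1)^4 := by rw [← hlta]; ring_nf
        _ < l*(1+ta)^4 + (1-l)*1^4 := this
        _ = l*(1+ta)^4 + (1-l)*1 := by ring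
    have c2 : tb^4 < l*ta^4 := by
      have := hsc.2 (Set.mem_univ ta) (Set.mem_univ (0:ℝ))
        (by intro h; exact absurd h (ne_of_lt ha0)) hl0 (show (0:ℝ) < 1 - l by linarith) (show l + (1-l) = 1 by ring)
      simp only [smul_eq_mul] at this
      calc tb^4 = (l*ta + (1-l)*0)^4 := by rw [← hlta]; ring_nf
        _ < l*ta^4 + (1-l)*0^4 := this
        _ = l*ta^4 := by ring
    nlinarith [mul_le_mul_of_nonneg_left c2.le hK]
  -- a negative root satisfies 1 + (1+K) t < 0
  have tbound : ∀ t : ℝ, t < 0 → (1+t)^4 + K*t^4 = 2 → 1 + (1+K)*t < 0 := by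
    intro t ht hval
    by_contra hcon
    push_neg at hcon
    have h1 : -1 ≤ (1+K)*t := by linarith
    have ht1 : -1 ≤ t := by nlinarith [mul_nonneg hK (neg_nonneg.2 ht.le)]
    have h4 : ((1+K)*(-t))^4 ≤ 1 := by
      refine pow_le_one₀ (mul_nonneg (by linarith) (by linarith)) (by nlinarith)
    have h5 : (1+K)^4 * t^4 ≤ 1 := by nlinarith [h4]
    have h6 : (1+t)^4 ≤ 1 := pow_le_one₀ (by linarith) (by linarith)
    have hKlt : K < (1+K)^4 := by nlinarith [sq_nonneg K, pow_nonneg hK 3, pow_nonneg hK 4]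
    have h7 : K*t^4 < 1 := by
      nlinarith [mul_le_mul_of_nonneg_left h5 hK, hKlt,
        pow_pos (show (0:ℝ) < 1+K by linarith) 4, pow_nonneg (show (0:ℝ) ≤ t^4 by positivity) 1]
    linarith
  -- get a negative root t of f = 2 by IVT
  have hfc : ContinuousOn (fun t : ℝ => (1+t)^4 + K*t^4) (Set.Icc (-3) 0) := by fun_prop
  have hsub := intermediate_value_Icc' (by norm_num : (-3:ℝ) ≤ 0) hfc
  have hmem : (2:ℝ) ∈ Set.Icc ((1+(0:ℝ))^4 + K*(0:ℝ)^4) ((1+(-3:ℝ))^4 + K*(-3:ℝ)^4) := by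
    constructor <;> [norm_num; nlinarith]
  obtain ⟨t, htmem, htval⟩ := hsub hmem
  simp only [] at htval
  have ht0 : t < 0 := by
    rcases lt_or_eq_of_le htmem.2 with h | h
    · exact h
    · exfalso; rw [h] at htval; norm_num at htval
  have hA : 1 + (1+K)*t < 0 := tbound t ht0 htval
  -- the cubic and existence of a positive root y
  set B : ℝ := 6*((1+t)^2+K*t^2) with hBdef
  set C : ℝ := 4*((1+t)^3+K*t^3) with hCdef
  have hphi : ∀ y : ℝ, (1+(t+y))^4 + K*(t+y)^4 - (1+K)*y^4
      = 4*(1+(1+K)*t)*y^3 + B*y^2 + C*y + ((1+t)^4+K*t^4) := by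
    intro y; rw [hBdef, hCdef]; ring
  have hB0 : 0 ≤ B := by rw [hBdef]; positivity
  set A : ℝ := 4*(1+(1+K)*t) with hAdef
  have hAneg : A < 0 := by rw [hAdef]; linarith
  set S : ℝ := B + |C| + 2 with hSdef
  set M : ℝ := max 1 ((S+1)/(-A)) with hMdef
  have hM1 : 1 ≤ M := le_max_left _ _
  have hM0 : 0 < M := lt_of_lt_of_le one_pos hM1
  have hAM : A*M ≤ -(S+1) := by
    have h2 : (S+1)/(-A) ≤ M := le_max_right _ _
    have h3 := (div_le_iff₀ (by linarith : (0:ℝ) < -A)).mp h2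
    calc A*M = -(M*(-A)) := by ring
      _ ≤ -(S+1) := by linarith
  have hphiM : (1+(t+M))^4 + K*(t+M)^4 - (1+K)*M^4 < 0 := by
    rw [hphi M, htval]
    have h1 : A*M^3 ≤ -(S+1)*M^2 := by nlinarith [sq_nonneg M]
    have h2 : C*M ≤ |C| * M^2 := by
      calc C*M ≤ |C| * M := mul_le_mul_of_nonneg_right (le_abs_self C) hM0.le
        _ ≤ |C| * M^2 := by
            nlinarith [mul_nonneg (mul_nonneg (abs_nonneg C) hM0.le) (sub_nonneg.mpr hM1)]
    have h3 : (2:ℝ) ≤ 2*M^2 := by nlinarith [sq_nonneg (M-1), hM1]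
    have hSe : -(S+1) + B + |C| + 2 = -1 := by rw [hSdef]; ring
    calc 4*(1+(1+K)*t)*M^3 + B*M^2 + C*M + 2
        = A*M^3 + B*M^2 + C*M + 2 := by rw [hAdef]
      _ ≤ -(S+1)*M^2 + B*M^2 + |C| * M^2 + 2*M^2 := by linarith
      _ = -M^2 := by rw [hSdef]; ring
      _ < 0 := by nlinarith [pow_pos hM0 2]
  have hgc : ContinuousOn (fun y : ℝ => (1+(t+y))^4 + K*(t+y)^4 - (1+K)*y^4)
      (Set.Icc 0 M) := by fun_prop
  have hsub2 := intermediate_value_Icc' (le_of_lt hM0) hgc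
  have hmem2 : (0:ℝ) ∈ Set.Icc ((1+(t+M))^4 + K*(t+M)^4 - (1+K)*M^4)
      ((1+(t+0))^4 + K*(t+0)^4 - (1+K)*(0:ℝ)^4) := by
    constructor
    · exact hphiM.le
    · simp only [add_zero]
      rw [show (1+t)^4 + K*t^4 - (1+K)*(0:ℝ)^4 = (1+t)^4 + K*t^4 by ring, htval]
      norm_num
  obtain ⟨y, hymem, hyval⟩ := hsub2 hmem2
  simp only [] at hyval
  have hy0 : 0 < y := by
    rcases lt_or_eq_of_le hymem.1 with h | h
    · exact h
    · exfalso
      rw [← h] at hyval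
      rw [show (1+(t+0))^4 + K*(t+0)^4 - (1+K)*(0:ℝ)^4 = (1+t)^4 + K*t^4 by ring, htval]
        at hyval
      norm_num at hyval
  have hyeq : (1+(t+y))^4 + K*(t+y)^4 = (1+K)*y^4 := by linarith [hyval]
  -- uniqueness of the positive root y for this t
  have key : ∀ y1 y2 : ℝ, 0 < y1 → y1 < y2 →
      (1+(t+y1))^4 + K*(t+y1)^4 = (1+K)*y1^4 →
      (1+(t+y2))^4 + K*(t+y2)^4 = (1+K)*y2^4 → False := by
    intro y1 y2 hy1 h12 e1 e2
    set δ : ℝ := (y2 - y1)/3 with hδdef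
    have hδ : 0 < δ := by rw [hδdef]; linarith
    have hy2e : y2 = y1 + 3*δ := by rw [hδdef]; ring
    have eqw : ∀ w : ℝ, y1 ≤ w → w ≤ y2 →
        (1+(t+w))^4 + K*(t+w)^4 = (1+K)*w^4 := by
      intro w hw1 hw2
      have upper := Mle K hK (s := t+y1) (c := y1) (d := w - y1) hy1.le
        (by linarith) (le_of_eq e1)
      rw [show (1:ℝ)+(t+y1)+(w-y1) = 1+(t+w) by ring,
          show (t+y1)+(w-y1) = t+w by ring, show y1+(w-y1) = w by ring] at upper
      have lower : ¬ ((1+(t+w))^4 + K*(t+w)^4 < (1+K)*w^4) := by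
        intro hlt
        have := Mlt K hK (s := t+w) (c := w) (d := y2 - w) (by linarith)
          (by linarith) hlt
        rw [show (1:ℝ)+(t+w)+(y2-w) = 1+(t+y2) by ring,
            show (t+w)+(y2-w) = t+y2 by ring, show w+(y2-w) = y2 by ring] at this
        linarith [e2]
      exact le_antisymm upper (not_lt.mp lower)
    have E2 := eqw (y1+δ) (by linarith) (by linarith)
    have E3 := eqw (y1+2*δ) (by linarith) (by linarith)
    rw [hy2e] at e2
    have hzero : 24*(1+(1+K)*t)*δ^3 = 0 := by
      linear_combination e2 - 3*E3 + 3*E2 - e1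
    nlinarith [pow_pos hδ 3]
  -- assemble
  refine ⟨(t+y, y), ⟨hy0, ?_, ?_⟩, ?_⟩
  · simpa using hyeq
  · simp only []
    rw [show (1:ℝ)+(t+y)-y = 1+t by ring, show (t+y)-y = t by ring]
    exact htval
  · rintro ⟨x, y'⟩ ⟨hy'pos, he1, he2⟩
    simp only [] at he1 he2 hy'pos
    set t' : ℝ := x - y' with ht'def
    have he2' : (1+t')^4 + K*t'^4 = 2 := by
      rw [ht'def]
      rw [show (1:ℝ)+(x-y') = 1+x-y' by ring]
      exact he2
    have he1' : (1+(t'+y'))^4 + K*(t'+y')^4 = (1+K)*y'^4 := by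
      rw [show t'+y' = x by rw [ht'def]; ring]
      exact he1
    have ht'0 : t' < 0 := by
      by_contra hcon
      push_neg at hcon
      exact absurd he1' (ne_of_gt (step2 t' y' hcon hy'pos))
    have htt : t' = t := by
      rcases lt_trichotomy t' t with h | h | h
      · exact absurd (negroot t' t h ht0 he2' htval) id
      · exact h
      · exact absurd (negroot t t' h ht'0 htval he2') id
    rw [htt] at he1'
    have hyy : y' = y := by
      rcases lt_trichotomy y' y with h | h | h
      · exact absurd (key y' y hy'pos h he1' hyeq) id
      · exact h
      · exact absurd (key y y' hy0 h hyeq he1') id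
    have hx : x = t + y := by
      rw [← htt, ← hyy]
      have : t' = x - y' := ht'def
      linarith [this]
    rw [hx, hyy]
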